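/- arXiv:1705.00940 — 12 statements merged into one kernel-verified Lean document; each statement's English description precedes it below -/
import Mathlib

section
/- Let R be the 4×4 complex matrix with entries R = [[a,0,0,b],[0,c,d,0],[0,e,f,0],[g,0,0,h]]. If R satisfies the braided Yang–Baxter equation (R⊗I)(I⊗R)(R⊗I) = (I⊗R)(R⊗I)(I⊗R) on ℂ²⊗ℂ²⊗ℂ², then b·f·g = b·c·g. -/
open Matrix Complex

/-- R ⊗ I : the Kronecker product of a 4×4 matrix with the 2×2 identity, as an 8×8 matrix. -/
noncomputable def RI (R : Matrix (Fin 4) (Fin 4) ℂ) : Matrix (Fin 8) (Fin 8) ℂ :=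
  fun i j => R ⟨i.val / 2, by omega⟩ ⟨j.val / 2, by omega⟩ * (if i.val % 2 = j.val % 2 then 1 else 0)

/-- I ⊗ R : the Kronecker product of the 2×2 identity with a 4×4 matrix, as an 8×8 matrix. -/
noncomputable def IR (R : Matrix (Fin 4) (Fin 4) ℂ) : Matrix (Fin 8) (Fin 8) ℂ :=
  fun i j => (if i.val / 4 = j.val / 4 then 1 else 0) * R ⟨i.val % 4, by omega⟩ ⟨j.val % 4, by omega⟩

/-- The braided Yang–Baxter equation. -/
def YB (R : Matrix (Fin 4) (Fin 4) ℂ) : Prop :=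
  RI R * IR R * RI R = IR R * RI R * IR R

/-- Tensor product of two vectors of ℂ², in the computational basis of ℂ⁴. -/
def tens (x y : Fin 2 → ℂ) : Fin 4 → ℂ :=
  ![x 0 * y 0, x 0 * y 1, x 1 * y 0, x 1 * y 1]

theorem stmt0 (a b c d e f g h : ℂ)
    (hYB : YB !![a,0,0,b; 0,c,d,0; 0,e,f,0; g,0,0,h]) :
    b * f * g = b * c * g := by
  have h00 := congrFun (congrFun hYB 0) 0
  simp only [RI, IR, Matrix.mul_apply, Fin.sum_univ_eight,
    show ((0:Fin 8):ℕ) = 0 from rfl, show ((1:Fin 8):ℕ) = 1 from rfl,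
    show ((2:Fin 8):ℕ) = 2 from rfl, show ((3:Fin 8):ℕ) = 3 from rfl,
    show ((4:Fin 8):ℕ) = 4 from rfl, show ((5:Fin 8):ℕ) = 5 from rfl,
    show ((6:Fin 8):ℕ) = 6 from rfl, show ((7:Fin 8):ℕ) = 7 from rfl] at h00
  norm_num [Matrix.cons_val_zero, Matrix.cons_val_one, Matrix.cons_val', Matrix.cons_val_two, Matrix.cons_val_three,
    show (⟨0, by omega⟩ : Fin 4) = 0 from rfl, show (⟨1, by omega⟩ : Fin 4) = 1 from rfl,
    show (⟨2, by omega⟩ : Fin 4) = 2 from rfl, show (⟨3, by omega⟩ : Fin 4) = 3 from rfl] at h00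
  rcases h00 with (h|h)|h <;> subst h <;> ring
end

section
/- Let R be the 4×4 complex matrix [[a,0,0,b],[0,c,d,0],[0,e,f,0],[g,0,0,h]]. If R satisfies the braided Yang–Baxter equation, then b·g·e = d·c·f and f·c·e = b·d·g. -/
open Matrix Complex

theorem stmt1 (a b c d e f g h : ℂ)
    (hYB : YB !![a,0,0,b; 0,c,d,0; 0,e,f,0; g,0,0,h]) :
    b * g * e = d * c * f ∧ f * c * e = b * d * g := by
  have h1 := congrFun (congrFun hYB 1) 2
  have h2 := congrFun (congrFun hYB 2) 1
  simp [RI, IR, Matrix.mul_apply, Fin.sum_univ_eight, Matrix.cons_val_zero,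
    Matrix.cons_val_one, Matrix.head_cons,
    show (((2:Fin 8)):ℕ) = 2 from rfl, show (((3:Fin 8)):ℕ) = 3 from rfl,
    show (((4:Fin 8)):ℕ) = 4 from rfl, show (((5:Fin 8)):ℕ) = 5 from rfl,
    show (((6:Fin 8)):ℕ) = 6 from rfl, show (((7:Fin 8)):ℕ) = 7 from rfl] at h1 h2
  constructor
  · linear_combination h1
  · linear_combination -h2
end

section
/- Let R = [[a,0,0,b],[0,c,d,0],[0,e,f,0],[g,0,0,h]] satisfy the braided Yang–Baxter equation, and let φ be a real number. Then the matrix R' = [[a,0,0,b·e^{iφ}],[0,c,d,0],[0,e,f,0],[g·e^{-iφ},0,0,h]] also satisfies the braided Yang–Baxter equation. -/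
open Matrix Complex

private def bits (i : Fin 8) : ℕ := i.val / 4 + i.val % 4 / 2 + i.val % 2

set_option maxHeartbeats 2000000 in
theorem stmt5 (a b c d e f g h : ℂ) (φ : ℝ)
    (hYB : YB !![a,0,0,b; 0,c,d,0; 0,e,f,0; g,0,0,h]) :
    YB !![a,0,0, b * Complex.exp (φ * Complex.I);
          0,c,d,0; 0,e,f,0;
          g * Complex.exp (-(φ * Complex.I)),0,0,h] := by
  set R : Matrix (Fin 4) (Fin 4) ℂ := !![a,0,0,b; 0,c,d,0; 0,e,f,0; g,0,0,h] with hR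
  set q : ℂ := Complex.exp (φ * Complex.I / 2) with hqdef
  have hq0 : q ≠ 0 := Complex.exp_ne_zero _
  have hq : Complex.exp (φ * Complex.I) = q * q := by
    rw [hqdef, ← Complex.exp_add]; ring_nf
  have hq' : Complex.exp (-(φ * Complex.I)) = q⁻¹ * q⁻¹ := by
    rw [hqdef, ← Complex.exp_neg, ← Complex.exp_add]; ring_nf
  set D : Matrix (Fin 8) (Fin 8) ℂ := Matrix.diagonal (fun i => q⁻¹ ^ bits i) with hD
  set E : Matrix (Fin 8) (Fin 8) ℂ := Matrix.diagonal (fun i => q ^ bits i) with hE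
  have hED : E * D = 1 := by
    rw [hE, hD, Matrix.diagonal_mul_diagonal, ← Matrix.diagonal_one]
    congr 1; funext i; rw [← mul_pow, mul_inv_cancel₀ hq0, one_pow]
  have claim1 : RI !![a,0,0, b * Complex.exp (φ * Complex.I);
          0,c,d,0; 0,e,f,0;
          g * Complex.exp (-(φ * Complex.I)),0,0,h] = D * RI R * E := by
    ext i j
    rw [hD, hE, Matrix.mul_diagonal, Matrix.diagonal_mul]
    fin_cases i <;> fin_cases j <;>
      (try simp [RI, hR, hq, hq', bits]) <;> (try field_simp) <;> (try ring_nf) <;> (try tauto)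
  have claim2 : IR !![a,0,0, b * Complex.exp (φ * Complex.I);
          0,c,d,0; 0,e,f,0;
          g * Complex.exp (-(φ * Complex.I)),0,0,h] = D * IR R * E := by
    ext i j
    rw [hD, hE, Matrix.mul_diagonal, Matrix.diagonal_mul]
    fin_cases i <;> fin_cases j <;>
      (try simp [IR, hR, hq, hq', bits]) <;> (try field_simp) <;> (try ring_nf) <;> (try tauto)
  have key : ∀ X Y Z : Matrix (Fin 8) (Fin 8) ℂ,
      (D * X * E) * (D * Y * E) * (D * Z * E) = D * (X * Y * Z) * E := by
    intro X Y Z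
    simp only [Matrix.mul_assoc]
    rw [← Matrix.mul_assoc E D, hED, Matrix.one_mul, ← Matrix.mul_assoc E D, hED,
      Matrix.one_mul]
  unfold YB at hYB ⊢
  rw [claim1, claim2, key, key, hYB]
end

section
/- Let R = [[a,0,0,0],[0,0,d,0],[0,e,0,0],[0,0,0,h]] with |a| = |d| = |e| = |h| = 1. Then R is a unitary solution of the braided Yang–Baxter equation. -/
open Matrix Complex

@[simp] lemma cons_val_five' {α : Type*} {m : ℕ} (x : α) (u : Fin (m+5) → α) :
    vecCons x u 5 = vecHead (vecTail (vecTail (vecTail (vecTail u)))) := rfl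
@[simp] lemma cons_val_six' {α : Type*} {m : ℕ} (x : α) (u : Fin (m+6) → α) :
    vecCons x u 6 = vecHead (vecTail (vecTail (vecTail (vecTail (vecTail u))))) := rfl
@[simp] lemma cons_val_seven' {α : Type*} {m : ℕ} (x : α) (u : Fin (m+7) → α) :
    vecCons x u 7 = vecHead (vecTail (vecTail (vecTail (vecTail (vecTail (vecTail u)))))) := rfl

lemma RI_eq (a d e h : ℂ) : RI !![a,0,0,0; 0,0,d,0; 0,e,0,0; 0,0,0,h] =
    !![a,0,0,0,0,0,0,0; 0,a,0,0,0,0,0,0; 0,0,0,0,d,0,0,0; 0,0,0,0,0,d,0,0;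
       0,0,e,0,0,0,0,0; 0,0,0,e,0,0,0,0; 0,0,0,0,0,0,h,0; 0,0,0,0,0,0,0,h] := by
  ext i j
  fin_cases i <;> fin_cases j <;> simp [RI] <;> rfl

lemma IR_eq (a d e h : ℂ) : IR !![a,0,0,0; 0,0,d,0; 0,e,0,0; 0,0,0,h] =
    !![a,0,0,0,0,0,0,0; 0,0,d,0,0,0,0,0; 0,e,0,0,0,0,0,0; 0,0,0,h,0,0,0,0;
       0,0,0,0,a,0,0,0; 0,0,0,0,0,0,d,0; 0,0,0,0,0,e,0,0; 0,0,0,0,0,0,0,h] := by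
  ext i j
  fin_cases i <;> fin_cases j <;> simp [IR] <;> rfl

section

variable (a d e h : ℂ)

private def Am : Matrix (Fin 8) (Fin 8) ℂ :=
    !![a,0,0,0,0,0,0,0; 0,a,0,0,0,0,0,0; 0,0,0,0,d,0,0,0; 0,0,0,0,0,d,0,0;
       0,0,e,0,0,0,0,0; 0,0,0,e,0,0,0,0; 0,0,0,0,0,0,h,0; 0,0,0,0,0,0,0,h]

private def Bm : Matrix (Fin 8) (Fin 8) ℂ :=
    !![a,0,0,0,0,0,0,0; 0,0,d,0,0,0,0,0; 0,e,0,0,0,0,0,0; 0,0,0,h,0,0,0,0;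
       0,0,0,0,a,0,0,0; 0,0,0,0,0,0,d,0; 0,0,0,0,0,e,0,0; 0,0,0,0,0,0,0,h]

set_option maxHeartbeats 2000000 in
private lemma AB_eq : Am a d e h * Bm a d e h =
    !![a*a,0,0,0,0,0,0,0; 0,0,a*d,0,0,0,0,0; 0,0,0,0,d*a,0,0,0; 0,0,0,0,0,0,d*d,0;
       0,e*e,0,0,0,0,0,0; 0,0,0,e*h,0,0,0,0; 0,0,0,0,0,h*e,0,0; 0,0,0,0,0,0,0,h*h] := by
  unfold Am Bm
  ext i j
  fin_cases i <;> fin_cases j <;>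
    simp only [Matrix.mul_apply, Fin.sum_univ_eight, Matrix.cons_val', Matrix.cons_val_zero,
      Matrix.cons_val_one, Matrix.cons_val_two, Matrix.cons_val_three, Matrix.cons_val_four,
      cons_val_five', cons_val_six', cons_val_seven', Matrix.head_cons, Matrix.tail_cons,
      Matrix.head_fin_const, Matrix.empty_val', Matrix.cons_val_fin_one, Matrix.of_apply,
      Matrix.cons_val_succ', Matrix.cons_val_zero',
      mul_zero, zero_mul, add_zero, zero_add, mul_one, one_mul]

set_option maxHeartbeats 2000000 in
private lemma BA_eq : Bm a d e h * Am a d e h =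
    !![a*a,0,0,0,0,0,0,0; 0,0,0,0,d*d,0,0,0; 0,e*a,0,0,0,0,0,0; 0,0,0,0,0,h*d,0,0;
       0,0,a*e,0,0,0,0,0; 0,0,0,0,0,0,d*h,0; 0,0,0,e*e,0,0,0,0; 0,0,0,0,0,0,0,h*h] := by
  unfold Am Bm
  ext i j
  fin_cases i <;> fin_cases j <;>
    simp only [Matrix.mul_apply, Fin.sum_univ_eight, Matrix.cons_val', Matrix.cons_val_zero,
      Matrix.cons_val_one, Matrix.cons_val_two, Matrix.cons_val_three, Matrix.cons_val_four,
      cons_val_five', cons_val_six', cons_val_seven', Matrix.head_cons, Matrix.tail_cons,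
      Matrix.head_fin_const, Matrix.empty_val', Matrix.cons_val_fin_one, Matrix.of_apply,
      Matrix.cons_val_succ', Matrix.cons_val_zero',
      mul_zero, zero_mul, add_zero, zero_add, mul_one, one_mul]

set_option maxHeartbeats 2000000 in
private lemma ABA_eq : (!![a*a,0,0,0,0,0,0,0; 0,0,a*d,0,0,0,0,0; 0,0,0,0,d*a,0,0,0;
       0,0,0,0,0,0,d*d,0; 0,e*e,0,0,0,0,0,0; 0,0,0,e*h,0,0,0,0; 0,0,0,0,0,h*e,0,0;
       0,0,0,0,0,0,0,h*h] : Matrix (Fin 8) (Fin 8) ℂ) * Am a d e h =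
    !![a*a*a,0,0,0,0,0,0,0; 0,0,0,0,a*d*d,0,0,0; 0,0,d*a*e,0,0,0,0,0; 0,0,0,0,0,0,d*d*h,0;
       0,e*e*a,0,0,0,0,0,0; 0,0,0,0,0,e*h*d,0,0; 0,0,0,h*e*e,0,0,0,0; 0,0,0,0,0,0,0,h*h*h] := by
  unfold Am
  ext i j
  fin_cases i <;> fin_cases j <;>
    simp only [Matrix.mul_apply, Fin.sum_univ_eight, Matrix.cons_val', Matrix.cons_val_zero,
      Matrix.cons_val_one, Matrix.cons_val_two, Matrix.cons_val_three, Matrix.cons_val_four,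
      cons_val_five', cons_val_six', cons_val_seven', Matrix.head_cons, Matrix.tail_cons,
      Matrix.head_fin_const, Matrix.empty_val', Matrix.cons_val_fin_one, Matrix.of_apply,
      Matrix.cons_val_succ', Matrix.cons_val_zero',
      mul_zero, zero_mul, add_zero, zero_add, mul_one, one_mul]

set_option maxHeartbeats 2000000 in
private lemma BAB_eq : (!![a*a,0,0,0,0,0,0,0; 0,0,0,0,d*d,0,0,0; 0,e*a,0,0,0,0,0,0;
       0,0,0,0,0,h*d,0,0; 0,0,a*e,0,0,0,0,0; 0,0,0,0,0,0,d*h,0; 0,0,0,e*e,0,0,0,0;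
       0,0,0,0,0,0,0,h*h] : Matrix (Fin 8) (Fin 8) ℂ) * Bm a d e h =
    !![a*a*a,0,0,0,0,0,0,0; 0,0,0,0,a*d*d,0,0,0; 0,0,d*a*e,0,0,0,0,0; 0,0,0,0,0,0,d*d*h,0;
       0,e*e*a,0,0,0,0,0,0; 0,0,0,0,0,e*h*d,0,0; 0,0,0,h*e*e,0,0,0,0; 0,0,0,0,0,0,0,h*h*h] := by
  unfold Bm
  ext i j
  fin_cases i <;> fin_cases j <;>
    simp only [Matrix.mul_apply, Fin.sum_univ_eight, Matrix.cons_val', Matrix.cons_val_zero,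
      Matrix.cons_val_one, Matrix.cons_val_two, Matrix.cons_val_three, Matrix.cons_val_four,
      cons_val_five', cons_val_six', cons_val_seven', Matrix.head_cons, Matrix.tail_cons,
      Matrix.head_fin_const, Matrix.empty_val', Matrix.cons_val_fin_one, Matrix.of_apply,
      Matrix.cons_val_succ', Matrix.cons_val_zero',
      mul_zero, zero_mul, add_zero, zero_add, mul_one, one_mul] <;> ring

end

theorem stmt6 (a d e h : ℂ) (ha : ‖a‖ = 1) (hd : ‖d‖ = 1)
    (he : ‖e‖ = 1) (hh : ‖h‖ = 1) :
    YB !![a,0,0,0; 0,0,d,0; 0,e,0,0; 0,0,0,h] ∧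
    !![a,0,0,0; 0,0,d,0; 0,e,0,0; 0,0,0,h] *
      (!![a,0,0,0; 0,0,d,0; 0,e,0,0; 0,0,0,h]).conjTranspose = 1 := by
  have ha' : a * (starRingEnd ℂ) a = 1 := by
    rw [Complex.mul_conj, Complex.normSq_eq_norm_sq, ha]; norm_num
  have hd' : d * (starRingEnd ℂ) d = 1 := by
    rw [Complex.mul_conj, Complex.normSq_eq_norm_sq, hd]; norm_num
  have he' : e * (starRingEnd ℂ) e = 1 := by
    rw [Complex.mul_conj, Complex.normSq_eq_norm_sq, he]; norm_num
  have hh' : h * (starRingEnd ℂ) h = 1 := by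
    rw [Complex.mul_conj, Complex.normSq_eq_norm_sq, hh]; norm_num
  constructor
  · unfold YB
    rw [RI_eq, IR_eq, ← Am, ← Bm, AB_eq, ABA_eq, BA_eq, BAB_eq]
  · ext i j
    fin_cases i <;> fin_cases j <;>
      simp [Matrix.mul_apply, Fin.sum_univ_four, Matrix.one_apply, ha', hd', he', hh']
end

section
/- Let R = [[a,0,0,0],[0,0,d,0],[0,e,0,0],[0,0,0,h]] with a·h ≠ d·e. Then R is entangling: there exists a product state v ⊗ w in ℂ²⊗ℂ² (v, w nonzero) such that R(v⊗w) is not of the form v'⊗w' for any vectors v', w' in ℂ². -/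
open Matrix Complex

theorem stmt7 (a d e h : ℂ) (hne : a * h ≠ d * e) :
    ∃ v w : Fin 2 → ℂ, v ≠ 0 ∧ w ≠ 0 ∧
      ¬ ∃ v' w' : Fin 2 → ℂ,
        (!![a,0,0,0; 0,0,d,0; 0,e,0,0; 0,0,0,h]).mulVec (tens v w) = tens v' w' := by
  refine ⟨![1,1], ![1,1], ?_, ?_, ?_⟩
  · intro hc; have := congrFun hc 0; simp at this
  · intro hc; have := congrFun hc 0; simp at this
  · rintro ⟨v', w', hvw⟩
    have h0 := congrFun hvw 0
    have h1 := congrFun hvw 1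
    have h2 := congrFun hvw 2
    have h3 := congrFun hvw 3
    simp [tens, mulVec, dotProduct, Fin.sum_univ_four, Matrix.cons_val_zero,
      Matrix.cons_val_one] at h0 h1 h2 h3
    apply hne
    rw [h0, h1, h2, h3]; ring
end

section
/- Let R be a 4×4 complex matrix of the form [[0,0,0,b],[0,c,d,0],[0,e,f,0],[g,0,0,0]] that is a unitary solution of the braided Yang–Baxter equation. Then e = d = 0 and c = f, so R = [[0,0,0,b],[0,c,0,0],[0,0,c,0],[g,0,0,0]] with |b| = |c| = |g| = 1. -/
open Matrix Complex

private lemma abs_one_of_mul_conj {z : ℂ} (h : z * (starRingEnd ℂ) z = 1) :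
    ‖z‖ = 1 := by
  rw [Complex.mul_conj] at h
  have h1 : Complex.normSq z = 1 := by exact_mod_cast h
  rw [Complex.norm_def, h1, Real.sqrt_one]

set_option maxHeartbeats 1000000 in
theorem stmt10 (b c d e f g : ℂ)
    (hYB : YB !![0,0,0,b; 0,c,d,0; 0,e,f,0; g,0,0,0])
    (hU : !![0,0,0,b; 0,c,d,0; 0,e,f,0; g,0,0,0] *
      (!![0,0,0,b; 0,c,d,0; 0,e,f,0; g,0,0,0]).conjTranspose = 1) :
    e = 0 ∧ d = 0 ∧ c = f ∧
    ‖b‖ = 1 ∧ ‖c‖ = 1 ∧ ‖g‖ = 1 := by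
  unfold YB at hYB
  have h03 := congrFun (congrFun hYB 0) 3
  have h06 := congrFun (congrFun hYB 0) 6
  have h22 := congrFun (congrFun hYB 2) 2
  simp only [RI, IR, Matrix.mul_apply, Fin.sum_univ_eight,
    show ((0:Fin 8).val)=0 from rfl, show ((1:Fin 8).val)=1 from rfl,
    show ((2:Fin 8).val)=2 from rfl, show ((3:Fin 8).val)=3 from rfl,
    show ((4:Fin 8).val)=4 from rfl, show ((5:Fin 8).val)=5 from rfl,
    show ((6:Fin 8).val)=6 from rfl, show ((7:Fin 8).val)=7 from rfl,
    Nat.reduceDiv, Nat.reduceMod, Fin.mk_zero, Fin.mk_one,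
    show ((⟨2, by omega⟩:Fin 4)) = 2 from rfl, show ((⟨3, by omega⟩:Fin 4)) = 3 from rfl,
    Matrix.cons_val', Matrix.cons_val_zero, Matrix.cons_val_one, Matrix.head_cons,
    Matrix.head_fin_const, Matrix.cons_val_fin_one, Matrix.of_apply] at h03 h06 h22
  simp [Matrix.cons_val] at h03 h06 h22
  have u00 := congrFun (congrFun hU 0) 0
  have u11 := congrFun (congrFun hU 1) 1
  have u22 := congrFun (congrFun hU 2) 2
  have u33 := congrFun (congrFun hU 3) 3
  simp only [Matrix.mul_apply, Fin.sum_univ_four, Matrix.conjTranspose_apply,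
    Matrix.cons_val', Matrix.cons_val_zero, Matrix.cons_val_one, Matrix.head_cons,
    show ((2:Fin 4)) = (⟨2, by omega⟩ : Fin 4) from rfl,
    show ((3:Fin 4)) = (⟨3, by omega⟩ : Fin 4) from rfl,
    Matrix.one_apply, Matrix.of_apply] at u00 u11 u22 u33
  norm_num [Matrix.vecHead, Matrix.vecTail] at u00 u11 u22 u33
  have hb : ‖b‖ = 1 := abs_one_of_mul_conj u00
  have hg : ‖g‖ = 1 := abs_one_of_mul_conj u33
  have hbne : b ≠ 0 := by intro h; rw [h] at hb; simp at hb
  have he : e = 0 := h03.resolve_left hbne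
  have hd : d = 0 := h06.resolve_left hbne
  subst he hd
  have hc : ‖c‖ = 1 := by
    simpa using abs_one_of_mul_conj (by simpa using u11)
  have hf : ‖f‖ = 1 := by
    simpa using abs_one_of_mul_conj (by simpa using u22)
  have hcne : c ≠ 0 := by intro h; rw [h] at hc; simp at hc
  have hfne : f ≠ 0 := by intro h; rw [h] at hf; simp at hf
  have hcf : c = f := by
    have key : c * f * (c - f) = 0 := by linear_combination h22
    rcases mul_eq_zero.mp key with h | h
    · rcases mul_eq_zero.mp h with h | h
      · exact absurd h hcne
      · exact absurd h hfne
    · exact sub_eq_zero.mp h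
  exact ⟨rfl, rfl, hcf, hb, hc, hg⟩
end

section
/- Let R = [[0,0,0,b],[0,c,0,0],[0,0,c,0],[g,0,0,0]] with |b| = |c| = |g| = 1. Then R is a unitary solution of the braided Yang–Baxter equation. -/
open Matrix Complex

lemma vec8_0 {α : Type*} (a0 a1 a2 a3 a4 a5 a6 a7 : α) : ![a0, a1, a2, a3, a4, a5, a6, a7] (0 : Fin 8) = a0 := rfl
lemma vec8_1 {α : Type*} (a0 a1 a2 a3 a4 a5 a6 a7 : α) : ![a0, a1, a2, a3, a4, a5, a6, a7] (1 : Fin 8) = a1 := rfl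
lemma vec8_2 {α : Type*} (a0 a1 a2 a3 a4 a5 a6 a7 : α) : ![a0, a1, a2, a3, a4, a5, a6, a7] (2 : Fin 8) = a2 := rfl
lemma vec8_3 {α : Type*} (a0 a1 a2 a3 a4 a5 a6 a7 : α) : ![a0, a1, a2, a3, a4, a5, a6, a7] (3 : Fin 8) = a3 := rfl
lemma vec8_4 {α : Type*} (a0 a1 a2 a3 a4 a5 a6 a7 : α) : ![a0, a1, a2, a3, a4, a5, a6, a7] (4 : Fin 8) = a4 := rfl
lemma vec8_5 {α : Type*} (a0 a1 a2 a3 a4 a5 a6 a7 : α) : ![a0, a1, a2, a3, a4, a5, a6, a7] (5 : Fin 8) = a5 := rfl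
lemma vec8_6 {α : Type*} (a0 a1 a2 a3 a4 a5 a6 a7 : α) : ![a0, a1, a2, a3, a4, a5, a6, a7] (6 : Fin 8) = a6 := rfl
lemma vec8_7 {α : Type*} (a0 a1 a2 a3 a4 a5 a6 a7 : α) : ![a0, a1, a2, a3, a4, a5, a6, a7] (7 : Fin 8) = a7 := rfl

lemma vec4_0 {α : Type*} (a0 a1 a2 a3 : α) : ![a0, a1, a2, a3] (0 : Fin 4) = a0 := rfl
lemma vec4_1 {α : Type*} (a0 a1 a2 a3 : α) : ![a0, a1, a2, a3] (1 : Fin 4) = a1 := rfl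
lemma vec4_2 {α : Type*} (a0 a1 a2 a3 : α) : ![a0, a1, a2, a3] (2 : Fin 4) = a2 := rfl
lemma vec4_3 {α : Type*} (a0 a1 a2 a3 : α) : ![a0, a1, a2, a3] (3 : Fin 4) = a3 := rfl

lemma eta8 {α : Type*} (A : Matrix (Fin 8) (Fin 8) α) :
    A = !![A 0 0, A 0 1, A 0 2, A 0 3, A 0 4, A 0 5, A 0 6, A 0 7;
      A 1 0, A 1 1, A 1 2, A 1 3, A 1 4, A 1 5, A 1 6, A 1 7;
      A 2 0, A 2 1, A 2 2, A 2 3, A 2 4, A 2 5, A 2 6, A 2 7;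
      A 3 0, A 3 1, A 3 2, A 3 3, A 3 4, A 3 5, A 3 6, A 3 7;
      A 4 0, A 4 1, A 4 2, A 4 3, A 4 4, A 4 5, A 4 6, A 4 7;
      A 5 0, A 5 1, A 5 2, A 5 3, A 5 4, A 5 5, A 5 6, A 5 7;
      A 6 0, A 6 1, A 6 2, A 6 3, A 6 4, A 6 5, A 6 6, A 6 7;
      A 7 0, A 7 1, A 7 2, A 7 3, A 7 4, A 7 5, A 7 6, A 7 7] :=
  (Matrix.etaExpand_eq A).symm

lemma eta4 {α : Type*} (A : Matrix (Fin 4) (Fin 4) α) :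
    A = !![A 0 0, A 0 1, A 0 2, A 0 3;
      A 1 0, A 1 1, A 1 2, A 1 3;
      A 2 0, A 2 1, A 2 2, A 2 3;
      A 3 0, A 3 1, A 3 2, A 3 3] :=
  (Matrix.etaExpand_eq A).symm

lemma RI_concrete (b c g : ℂ) :
    RI !![0,0,0,b; 0,c,0,0; 0,0,c,0; g,0,0,0] = !![0, 0, 0, 0, 0, 0, b, 0;
      0, 0, 0, 0, 0, 0, 0, b;
      0, 0, c, 0, 0, 0, 0, 0;
      0, 0, 0, c, 0, 0, 0, 0;
      0, 0, 0, 0, c, 0, 0, 0;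
      0, 0, 0, 0, 0, c, 0, 0;
      g, 0, 0, 0, 0, 0, 0, 0;
      0, g, 0, 0, 0, 0, 0, 0] := by
  ext i j
  fin_cases i <;> fin_cases j <;> simp [RI] <;> rfl

lemma IR_concrete (b c g : ℂ) :
    IR !![0,0,0,b; 0,c,0,0; 0,0,c,0; g,0,0,0] = !![0, 0, 0, b, 0, 0, 0, 0;
      0, c, 0, 0, 0, 0, 0, 0;
      0, 0, c, 0, 0, 0, 0, 0;
      g, 0, 0, 0, 0, 0, 0, 0;
      0, 0, 0, 0, 0, 0, 0, b;
      0, 0, 0, 0, 0, c, 0, 0;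
      0, 0, 0, 0, 0, 0, c, 0;
      0, 0, 0, 0, g, 0, 0, 0] := by
  ext i j
  fin_cases i <;> fin_cases j <;> simp [IR] <;> rfl

set_option maxHeartbeats 1000000 in
theorem stmt11 (b c g : ℂ) (hb : ‖b‖ = 1) (hc : ‖c‖ = 1)
    (hg : ‖g‖ = 1) :
    YB !![0,0,0,b; 0,c,0,0; 0,0,c,0; g,0,0,0] ∧
    !![0,0,0,b; 0,c,0,0; 0,0,c,0; g,0,0,0] *
      (!![0,0,0,b; 0,c,0,0; 0,0,c,0; g,0,0,0]).conjTranspose = 1 := by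
  have hb' : b * (starRingEnd ℂ) b = 1 := by
    rw [Complex.mul_conj]; norm_cast; simp [← Complex.sq_norm, hb]
  have hc' : c * (starRingEnd ℂ) c = 1 := by
    rw [Complex.mul_conj]; norm_cast; simp [← Complex.sq_norm, hc]
  have hg' : g * (starRingEnd ℂ) g = 1 := by
    rw [Complex.mul_conj]; norm_cast; simp [← Complex.sq_norm, hg]
  constructor
  · unfold YB
    rw [RI_concrete, IR_concrete]
    have h1 : (!![0, 0, 0, 0, 0, 0, b, 0;
      0, 0, 0, 0, 0, 0, 0, b;
      0, 0, c, 0, 0, 0, 0, 0;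
      0, 0, 0, c, 0, 0, 0, 0;
      0, 0, 0, 0, c, 0, 0, 0;
      0, 0, 0, 0, 0, c, 0, 0;
      g, 0, 0, 0, 0, 0, 0, 0;
      0, g, 0, 0, 0, 0, 0, 0] : Matrix (Fin 8) (Fin 8) ℂ) * !![0, 0, 0, b, 0, 0, 0, 0;
      0, c, 0, 0, 0, 0, 0, 0;
      0, 0, c, 0, 0, 0, 0, 0;
      g, 0, 0, 0, 0, 0, 0, 0;
      0, 0, 0, 0, 0, 0, 0, b;
      0, 0, 0, 0, 0, c, 0, 0;
      0, 0, 0, 0, 0, 0, c, 0;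
      0, 0, 0, 0, g, 0, 0, 0] = !![0, 0, 0, 0, 0, 0, b * c, 0;
      0, 0, 0, 0, b * g, 0, 0, 0;
      0, 0, c ^ 2, 0, 0, 0, 0, 0;
      c * g, 0, 0, 0, 0, 0, 0, 0;
      0, 0, 0, 0, 0, 0, 0, b * c;
      0, 0, 0, 0, 0, c ^ 2, 0, 0;
      0, 0, 0, b * g, 0, 0, 0, 0;
      0, c * g, 0, 0, 0, 0, 0, 0] := by
      refine Eq.trans (eta8 _) ?_
      simp only [Matrix.mul_apply, Fin.sum_univ_eight, Matrix.of_apply,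
        vec8_0, vec8_1, vec8_2, vec8_3, vec8_4, vec8_5, vec8_6, vec8_7,
        zero_mul, mul_zero, add_zero, zero_add, mul_one, one_mul]
      ring_nf
    have h2 : (!![0, 0, 0, b, 0, 0, 0, 0;
      0, c, 0, 0, 0, 0, 0, 0;
      0, 0, c, 0, 0, 0, 0, 0;
      g, 0, 0, 0, 0, 0, 0, 0;
      0, 0, 0, 0, 0, 0, 0, b;
      0, 0, 0, 0, 0, c, 0, 0;
      0, 0, 0, 0, 0, 0, c, 0;
      0, 0, 0, 0, g, 0, 0, 0] : Matrix (Fin 8) (Fin 8) ℂ) * !![0, 0, 0, 0, 0, 0, b, 0;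
      0, 0, 0, 0, 0, 0, 0, b;
      0, 0, c, 0, 0, 0, 0, 0;
      0, 0, 0, c, 0, 0, 0, 0;
      0, 0, 0, 0, c, 0, 0, 0;
      0, 0, 0, 0, 0, c, 0, 0;
      g, 0, 0, 0, 0, 0, 0, 0;
      0, g, 0, 0, 0, 0, 0, 0] = !![0, 0, 0, b * c, 0, 0, 0, 0;
      0, 0, 0, 0, 0, 0, 0, b * c;
      0, 0, c ^ 2, 0, 0, 0, 0, 0;
      0, 0, 0, 0, 0, 0, b * g, 0;
      0, b * g, 0, 0, 0, 0, 0, 0;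
      0, 0, 0, 0, 0, c ^ 2, 0, 0;
      c * g, 0, 0, 0, 0, 0, 0, 0;
      0, 0, 0, 0, c * g, 0, 0, 0] := by
      refine Eq.trans (eta8 _) ?_
      simp only [Matrix.mul_apply, Fin.sum_univ_eight, Matrix.of_apply,
        vec8_0, vec8_1, vec8_2, vec8_3, vec8_4, vec8_5, vec8_6, vec8_7,
        zero_mul, mul_zero, add_zero, zero_add, mul_one, one_mul]
      ring_nf
    have h3 : (!![0, 0, 0, 0, 0, 0, b * c, 0;
      0, 0, 0, 0, b * g, 0, 0, 0;
      0, 0, c ^ 2, 0, 0, 0, 0, 0;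
      c * g, 0, 0, 0, 0, 0, 0, 0;
      0, 0, 0, 0, 0, 0, 0, b * c;
      0, 0, 0, 0, 0, c ^ 2, 0, 0;
      0, 0, 0, b * g, 0, 0, 0, 0;
      0, c * g, 0, 0, 0, 0, 0, 0] : Matrix (Fin 8) (Fin 8) ℂ) * !![0, 0, 0, 0, 0, 0, b, 0;
      0, 0, 0, 0, 0, 0, 0, b;
      0, 0, c, 0, 0, 0, 0, 0;
      0, 0, 0, c, 0, 0, 0, 0;
      0, 0, 0, 0, c, 0, 0, 0;
      0, 0, 0, 0, 0, c, 0, 0;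
      g, 0, 0, 0, 0, 0, 0, 0;
      0, g, 0, 0, 0, 0, 0, 0] = !![b * c * g, 0, 0, 0, 0, 0, 0, 0;
      0, 0, 0, 0, b * c * g, 0, 0, 0;
      0, 0, c ^ 3, 0, 0, 0, 0, 0;
      0, 0, 0, 0, 0, 0, b * c * g, 0;
      0, b * c * g, 0, 0, 0, 0, 0, 0;
      0, 0, 0, 0, 0, c ^ 3, 0, 0;
      0, 0, 0, b * c * g, 0, 0, 0, 0;
      0, 0, 0, 0, 0, 0, 0, b * c * g] := by
      refine Eq.trans (eta8 _) ?_
      simp only [Matrix.mul_apply, Fin.sum_univ_eight, Matrix.of_apply,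
        vec8_0, vec8_1, vec8_2, vec8_3, vec8_4, vec8_5, vec8_6, vec8_7,
        zero_mul, mul_zero, add_zero, zero_add, mul_one, one_mul]
      ring_nf
    have h4 : (!![0, 0, 0, b * c, 0, 0, 0, 0;
      0, 0, 0, 0, 0, 0, 0, b * c;
      0, 0, c ^ 2, 0, 0, 0, 0, 0;
      0, 0, 0, 0, 0, 0, b * g, 0;
      0, b * g, 0, 0, 0, 0, 0, 0;
      0, 0, 0, 0, 0, c ^ 2, 0, 0;
      c * g, 0, 0, 0, 0, 0, 0, 0;
      0, 0, 0, 0, c * g, 0, 0, 0] : Matrix (Fin 8) (Fin 8) ℂ) * !![0, 0, 0, b, 0, 0, 0, 0;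
      0, c, 0, 0, 0, 0, 0, 0;
      0, 0, c, 0, 0, 0, 0, 0;
      g, 0, 0, 0, 0, 0, 0, 0;
      0, 0, 0, 0, 0, 0, 0, b;
      0, 0, 0, 0, 0, c, 0, 0;
      0, 0, 0, 0, 0, 0, c, 0;
      0, 0, 0, 0, g, 0, 0, 0] = !![b * c * g, 0, 0, 0, 0, 0, 0, 0;
      0, 0, 0, 0, b * c * g, 0, 0, 0;
      0, 0, c ^ 3, 0, 0, 0, 0, 0;
      0, 0, 0, 0, 0, 0, b * c * g, 0;
      0, b * c * g, 0, 0, 0, 0, 0, 0;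
      0, 0, 0, 0, 0, c ^ 3, 0, 0;
      0, 0, 0, b * c * g, 0, 0, 0, 0;
      0, 0, 0, 0, 0, 0, 0, b * c * g] := by
      refine Eq.trans (eta8 _) ?_
      simp only [Matrix.mul_apply, Fin.sum_univ_eight, Matrix.of_apply,
        vec8_0, vec8_1, vec8_2, vec8_3, vec8_4, vec8_5, vec8_6, vec8_7,
        zero_mul, mul_zero, add_zero, zero_add, mul_one, one_mul]
      ring_nf
    rw [h1, h3, h2, h4]
  · have hone : (1 : Matrix (Fin 4) (Fin 4) ℂ) = !![1,0,0,0; 0,1,0,0; 0,0,1,0; 0,0,0,1] := by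
      ext i j
      fin_cases i <;> fin_cases j <;> simp [Matrix.one_apply] <;> rfl
    rw [hone]
    refine Eq.trans (eta4 _) ?_
    simp only [Matrix.mul_apply, Fin.sum_univ_four, Matrix.of_apply,
      Matrix.conjTranspose_apply, vec4_0, vec4_1, vec4_2, vec4_3,
      Complex.star_def, map_zero, star_zero, zero_mul, mul_zero, add_zero, zero_add, mul_one, one_mul,
      hb', hc', hg']
end

section
/- There is no 4×4 complex matrix R = [[a,0,0,b],[0,c,0,0],[0,0,f,0],[g,0,0,h]] with all of a, b, c, f, g, h nonzero that is simultaneously unitary and a solution of the braided Yang–Baxter equation. -/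
open Matrix Complex

set_option maxHeartbeats 1000000 in
theorem stmt14 :
    ¬ ∃ a b c f g h : ℂ, a ≠ 0 ∧ b ≠ 0 ∧ c ≠ 0 ∧ f ≠ 0 ∧ g ≠ 0 ∧ h ≠ 0 ∧
      (!![a,0,0,b; 0,c,0,0; 0,0,f,0; g,0,0,h] *
        (!![a,0,0,b; 0,c,0,0; 0,0,f,0; g,0,0,h]).conjTranspose = 1) ∧
      YB !![a,0,0,b; 0,c,0,0; 0,0,f,0; g,0,0,h] := by
  rintro ⟨a, b, c, f, g, h, ha, hb, hc, hf, hg, hh, hU, hYB⟩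
  -- unitarity entries
  have u00 := congr_fun (congr_fun hU 0) 0
  simp [Matrix.mul_apply, Fin.sum_univ_succ, Matrix.conjTranspose_apply, Matrix.one_apply] at u00
  have u11 := congr_fun (congr_fun hU 1) 1
  simp [Matrix.mul_apply, Fin.sum_univ_succ, Matrix.conjTranspose_apply, Matrix.one_apply] at u11
  -- Yang-Baxter entries
  have e03 := congr_fun (congr_fun hYB (0:Fin 8)) (3:Fin 8)
  simp [RI, IR, Matrix.mul_apply, Fin.sum_univ_succ, Fin.val_succ, Matrix.cons_val_succ,
    show ((3:Fin 8):ℕ)=3 from rfl, show ((7:Fin 8):ℕ)=7 from rfl] at e03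
  have e11 := congr_fun (congr_fun hYB (1:Fin 8)) (1:Fin 8)
  simp [RI, IR, Matrix.mul_apply, Fin.sum_univ_succ, Fin.val_succ, Matrix.cons_val_succ,
    show ((3:Fin 8):ℕ)=3 from rfl, show ((7:Fin 8):ℕ)=7 from rfl] at e11
  have e17 := congr_fun (congr_fun hYB (1:Fin 8)) (7:Fin 8)
  simp [RI, IR, Matrix.mul_apply, Fin.sum_univ_succ, Fin.val_succ, Matrix.cons_val_succ,
    show ((3:Fin 8):ℕ)=3 from rfl, show ((7:Fin 8):ℕ)=7 from rfl] at e17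
  have e33 := congr_fun (congr_fun hYB (3:Fin 8)) (3:Fin 8)
  simp [RI, IR, Matrix.mul_apply, Fin.sum_univ_succ, Fin.val_succ, Matrix.cons_val_succ,
    show ((3:Fin 8):ℕ)=3 from rfl, show ((7:Fin 8):ℕ)=7 from rfl] at e33
  -- e03 : a * b * c = a * a * b + b * c * h
  -- e11 : a * c * a + b * h * g = c * a * c
  -- e17 : a * c * b + b * h * h = c * b * h
  -- e33 : c * h * c = g * a * b + h * c * h
  have h1 : c * h = a * c - a * a := by
    apply mul_left_cancel₀ hb; linear_combination -e03
  have h2 : h * h = -(a * a) := by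
    apply mul_left_cancel₀ hb; linear_combination e17 + b*h1
  have h3 : 2*c*c - 2*a*c + a*a = 0 := by
    apply mul_left_cancel₀ ha; apply mul_left_cancel₀ ha
    linear_combination (-a)*e11 + (-h)*e33 + (c*(c-h))*h2 + (a*a)*h1
  have h4 : h = 2*c - a := by
    apply mul_left_cancel₀ hc; linear_combination h1 - h3
  have key : 2*(c*c) = a*h := by rw [h4]; linear_combination h3
  -- pass to norms
  have n1 : normSq c = 1 := by
    have : (normSq c : ℂ) = 1 := by rw [← Complex.mul_conj]; exact u11
    exact_mod_cast this
  have n2 : normSq h * normSq h = normSq a * normSq a := by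
    have := congrArg normSq h2
    simpa [normSq_mul, normSq_neg] using this
  have n3 : 2 * 2 * (normSq c * normSq c) = normSq a * normSq h := by
    have := congrArg normSq key
    simpa [normSq_mul] using this
    
  have n4 : normSq a + normSq b = 1 := by
    have : ((normSq a : ℂ)) + (normSq b : ℂ) = 1 := by
      rw [← Complex.mul_conj, ← Complex.mul_conj]; exact u00
    exact_mod_cast this
  have pb : 0 < normSq b := normSq_pos.2 hb
  have pa : 0 ≤ normSq a := normSq_nonneg a
  have ph : 0 ≤ normSq h := normSq_nonneg h
  nlinarith [n1, n2, n3, n4, pb, pa, ph, sq_nonneg (normSq a - normSq h), sq_nonneg (normSq a + normSq h)]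
end

section
/- Let R = [[a,0,0,b],[0,c,d,0],[0,e,f,0],[g,0,0,h]] be a unitary solution of the braided Yang–Baxter equation with all eight entries a,b,c,d,e,f,g,h nonzero. Then c = f, a²+h² = 2d², and e² = d². -/
open Matrix Complex

theorem stmt15 (a b c d e f g h : ℂ)
    (hYB : YB !![a,0,0,b; 0,c,d,0; 0,e,f,0; g,0,0,h])
    (hU : !![a,0,0,b; 0,c,d,0; 0,e,f,0; g,0,0,h] *
      (!![a,0,0,b; 0,c,d,0; 0,e,f,0; g,0,0,h]).conjTranspose = 1)
    (ha : a ≠ 0) (hb : b ≠ 0) (hc : c ≠ 0) (hd : d ≠ 0)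
    (he : e ≠ 0) (hf : f ≠ 0) (hg : g ≠ 0) (hh : h ≠ 0) :
    c = f ∧ a ^ 2 + h ^ 2 = 2 * d ^ 2 ∧ e ^ 2 = d ^ 2 := by
  have e2 : ((2:Fin 8):ℕ) = 2 := rfl
  have e3 : ((3:Fin 8):ℕ) = 3 := rfl
  have e4 : ((4:Fin 8):ℕ) = 4 := rfl
  have e5 : ((5:Fin 8):ℕ) = 5 := rfl
  have e6 : ((6:Fin 8):ℕ) = 6 := rfl
  have e7 : ((7:Fin 8):ℕ) = 7 := rfl
  have m0 : (⟨0, by omega⟩ : Fin 4) = 0 := rfl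
  have m1 : (⟨1, by omega⟩ : Fin 4) = 1 := rfl
  have m2 : (⟨2, by omega⟩ : Fin 4) = 2 := rfl
  have m3 : (⟨3, by omega⟩ : Fin 4) = 3 := rfl
  have H00 := congrFun (congrFun hYB 0) 0
  have H12 := congrFun (congrFun hYB 1) 2
  have H21 := congrFun (congrFun hYB 2) 1
  have H03 := congrFun (congrFun hYB 0) 3
  have H17 := congrFun (congrFun hYB 1) 7
  simp [Matrix.mul_apply, RI, IR, Fin.sum_univ_eight, e2,e3,e4,e5,e6,e7,
    m0,m1,m2,m3] at H00 H12 H21 H03 H17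
  -- H00 : (f = c ∨ b = 0) ∨ g = 0
  have hcf : c = f := by
    rcases H00 with (h' | h') | h'
    · exact h'.symm
    · exact absurd h' hb
    · exact absurd h' hg
  have hed : e ^ 2 = d ^ 2 := by
    have key : b * g * (e ^ 2 - d ^ 2) = 0 := by linear_combination e * H12 - d * H21
    have := mul_eq_zero.mp key
    rcases this with h' | h'
    · exact absurd h' (mul_ne_zero hb hg)
    · linear_combination h'
  have hah : a ^ 2 + h ^ 2 = 2 * d ^ 2 := by
    have key : b * (a ^ 2 + h ^ 2 - 2 * d ^ 2) = 0 := by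
      linear_combination H17 - H03 + b * hed
    rcases mul_eq_zero.mp key with h' | h'
    · exact absurd h' hb
    · linear_combination h'
  exact ⟨hcf, hah, hed⟩
end

section
/- Let R = [[a,0,0,b],[0,c,d,0],[0,e,f,0],[g,0,0,h]] be a unitary solution of the braided Yang–Baxter equation with all eight entries nonzero and e = -d. Then a = c = f = h, d² = a², and b·g = -a², and moreover |a| = |b| = |g| = 1/√2. -/
open Matrix Complex

lemma cv2' {α : Type*} (x y : α) (t : Fin 2 → α) (h : 2 < 4) :
    Matrix.vecCons x (Matrix.vecCons y t) ⟨2,h⟩ = t 0 := rfl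

lemma cv3' {α : Type*} (x y : α) (t : Fin 2 → α) (h : 3 < 4) :
    Matrix.vecCons x (Matrix.vecCons y t) ⟨3,h⟩ = t 1 := rfl

lemma abs_of_normSq_half {x : ℂ} (hx : x * (starRingEnd ℂ) x = 1/2) :
    ‖x‖ = 1 / Real.sqrt 2 := by
  rw [Complex.mul_conj] at hx
  rw [show ((1:ℂ)/2) = ((1/2:ℝ):ℂ) by norm_num] at hx
  have hx' : Complex.normSq x = 1/2 := by exact_mod_cast hx
  rw [Complex.norm_def, hx', show (1:ℝ)/2 = (2:ℝ)⁻¹ by norm_num, Real.sqrt_inv, one_div]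

set_option maxHeartbeats 4000000 in
theorem stmt16 (a b c d e f g h : ℂ)
    (hYB : YB !![a,0,0,b; 0,c,d,0; 0,e,f,0; g,0,0,h])
    (hU : !![a,0,0,b; 0,c,d,0; 0,e,f,0; g,0,0,h] *
      (!![a,0,0,b; 0,c,d,0; 0,e,f,0; g,0,0,h]).conjTranspose = 1)
    (ha : a ≠ 0) (hb : b ≠ 0) (hc : c ≠ 0) (hd : d ≠ 0)
    (he : e ≠ 0) (hf : f ≠ 0) (hg : g ≠ 0) (hh : h ≠ 0)
    (hed : e = -d) :
    a = c ∧ c = f ∧ f = h ∧ d ^ 2 = a ^ 2 ∧ b * g = -a ^ 2 ∧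
    ‖a‖ = 1 / Real.sqrt 2 ∧ ‖b‖ = 1 / Real.sqrt 2 ∧
    ‖g‖ = 1 / Real.sqrt 2 := by
  subst hed
  have h55 := congrFun (congrFun hYB ⟨5, by norm_num⟩) ⟨5, by norm_num⟩
  have h24 := congrFun (congrFun hYB ⟨2, by norm_num⟩) ⟨4, by norm_num⟩
  have h05 := congrFun (congrFun hYB ⟨0, by norm_num⟩) ⟨5, by norm_num⟩
  have h06 := congrFun (congrFun hYB ⟨0, by norm_num⟩) ⟨6, by norm_num⟩
  have h17 := congrFun (congrFun hYB ⟨1, by norm_num⟩) ⟨7, by norm_num⟩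
  simp (config := { maxSteps := 10000000 }) only [RI, IR, Matrix.mul_apply, Fin.sum_univ_succ,
    Fin.sum_univ_zero, Fin.val_succ, Fin.val_zero, Matrix.cons_val_zero, Matrix.cons_val_one,
    Matrix.head_cons, Fin.mk_zero, Fin.mk_one, cv2', cv3',
    Nat.reduceDiv, Nat.reduceMod, Nat.reduceAdd, reduceIte, Matrix.of_apply, Fin.isValue,
    mul_one, mul_zero, zero_mul, one_mul, add_zero, zero_add] at h55 h24 h05 h06 h17
  norm_num at h55 h24 h05 h06 h17
  have u00 := congrFun (congrFun hU ⟨0, by norm_num⟩) ⟨0, by norm_num⟩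
  have u30 := congrFun (congrFun hU ⟨3, by norm_num⟩) ⟨0, by norm_num⟩
  have u33 := congrFun (congrFun hU ⟨3, by norm_num⟩) ⟨3, by norm_num⟩
  simp only [Matrix.mul_apply, Fin.sum_univ_succ, Fin.sum_univ_zero, Matrix.conjTranspose_apply,
    Matrix.cons_val_zero, Matrix.cons_val_one, Matrix.head_cons, Fin.mk_zero, Fin.mk_one,
    cv2', cv3', Matrix.of_apply, Matrix.one_apply, Fin.isValue, map_zero,
    mul_one, mul_zero, zero_mul, one_mul, add_zero, zero_add] at u00 u30 u33
  norm_num [Fin.ext_iff, Matrix.cons_val_two, Matrix.tail_cons] at u00 u30 u33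
  -- f = c
  have hfc : f = c := by
    have t1 : c * f * (f - c) = 0 := by linear_combination h55
    rcases mul_eq_zero.1 t1 with t | t
    · exact absurd t (mul_ne_zero hc hf)
    · exact sub_eq_zero.1 t
  -- a = c
  have hac : a = c := by
    have t3 : b * d * (2 * (a - c)) = 0 := by linear_combination h05 + b * d * hfc
    rcases mul_eq_zero.1 t3 with t | t
    · exact absurd t (mul_ne_zero hb hd)
    · rcases mul_eq_zero.1 t with t' | t'
      · exact absurd t' two_ne_zero
      · exact sub_eq_zero.1 t'
  have hfa : f = a := hfc.trans hac.symm
  -- b * g = -(a * a)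
  have hbg : b * g = -(a * a) := by
    have t2 : d * (b * g + a * a) = 0 := by
      linear_combination h24 + d * f * hac - a * d * hfa
    rcases mul_eq_zero.1 t2 with t | t
    · exact absurd t hd
    · linear_combination t
  -- a * h = d * d
  have had : a * h = d * d := by
    have t4 : b * (a * h - d * d) = 0 := by
      linear_combination h06 + b * (a - h) * hfa
    rcases mul_eq_zero.1 t4 with t | t
    · exact absurd t hb
    · exact sub_eq_zero.1 t
  -- h = a
  have hha : h = a := by
    have t5 : b * ((h - a) * (h - a)) = 0 := by
      linear_combination h17 + b * (a - h) * hac - b * had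
    rcases mul_eq_zero.1 t5 with t | t
    · exact absurd t hb
    · rcases mul_eq_zero.1 t with t' | t'
      · exact sub_eq_zero.1 t'
      · exact sub_eq_zero.1 t'
  have hd2 : d ^ 2 = a ^ 2 := by linear_combination -had + a * hha
  rw [hha] at u30 u33
  have key1 : a * (a * (starRingEnd ℂ) a - b * (starRingEnd ℂ) b) = 0 := by
    linear_combination -b * u30 + (starRingEnd ℂ) a * hbg
  have habs : a * (starRingEnd ℂ) a - b * (starRingEnd ℂ) b = 0 := by
    rcases mul_eq_zero.1 key1 with t | t
    · exact absurd t ha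
    · exact t
  have hA : a * (starRingEnd ℂ) a = 1/2 := by linear_combination (u00 + habs) / 2
  have hB : b * (starRingEnd ℂ) b = 1/2 := by linear_combination (u00 - habs) / 2
  have hG : g * (starRingEnd ℂ) g = 1/2 := by linear_combination u33 - hA
  exact ⟨hac, hfc.symm, hfa.trans hha.symm, hd2, by linear_combination hbg,
    abs_of_normSq_half hA, abs_of_normSq_half hB, abs_of_normSq_half hG⟩
end

section
/- Let a, b, g be complex numbers with b·g = -a² and |a| = |b| = |g| = 1/√2. Then R = [[a,0,0,b],[0,a,a,0],[0,-a,a,0],[g,0,0,a]] is a unitary solution of the braided Yang–Baxter equation. -/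
open Matrix Complex

lemma fv0 : ((0:Fin 8)).val = 0 := rfl
lemma fv1 : ((1:Fin 8)).val = 1 := rfl
lemma fv2 : ((2:Fin 8)).val = 2 := rfl
lemma fv3 : ((3:Fin 8)).val = 3 := rfl
lemma fv4 : ((4:Fin 8)).val = 4 := rfl
lemma fv5 : ((5:Fin 8)).val = 5 := rfl
lemma fv6 : ((6:Fin 8)).val = 6 := rfl
lemma fv7 : ((7:Fin 8)).val = 7 := rfl

set_option maxHeartbeats 4000000 in
theorem stmt17 (a b g : ℂ) (hbg : b * g = -a ^ 2)
    (ha : ‖a‖ = 1 / Real.sqrt 2) (hb : ‖b‖ = 1 / Real.sqrt 2)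
    (hg : ‖g‖ = 1 / Real.sqrt 2) :
    YB !![a,0,0,b; 0,a,a,0; 0,-a,a,0; g,0,0,a] ∧
    !![a,0,0,b; 0,a,a,0; 0,-a,a,0; g,0,0,a] *
      (!![a,0,0,b; 0,a,a,0; 0,-a,a,0; g,0,0,a]).conjTranspose = 1 := by
  have h2 : (Real.sqrt 2) ^ 2 = 2 := Real.sq_sqrt (by norm_num)
  have key : ∀ z : ℂ, ‖z‖ = 1 / Real.sqrt 2 → z * (starRingEnd ℂ) z = 1/2 := by
    intro z hz
    have hn : Complex.normSq z = 1/2 := by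
      rw [← Complex.sq_norm, hz, div_pow, one_pow, h2]
    rw [Complex.mul_conj, hn]
    norm_num
  have haa := key a ha
  have hbb := key b hb
  have hgg := key g hg
  have hg0 : g ≠ 0 := by
    intro h; rw [h] at hg; simp at hg
    exact (Real.sqrt_pos.mpr (by norm_num)).ne' hg.symm
  have hb0 : b ≠ 0 := by
    intro h; rw [h] at hb; simp at hb
    exact (Real.sqrt_pos.mpr (by norm_num)).ne' hb.symm
  constructor
  · show _ = _
    ext i j
    fin_cases i <;> fin_cases j <;>
      simp [RI, IR, Matrix.mul_apply, Fin.sum_univ_eight,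
        fv0, fv1, fv2, fv3, fv4, fv5, fv6, fv7] <;>
      first
        | ring1
        | exact Or.inl (by ring)
        | linear_combination a * hbg
        | linear_combination (-a) * hbg
  · have h1 : a * (starRingEnd ℂ) g + b * (starRingEnd ℂ) a = 0 :=
      mul_left_cancel₀ hg0 (by
        linear_combination a * hgg + (starRingEnd ℂ) a * hbg + (-a) * haa)
    have h2 : g * (starRingEnd ℂ) a + a * (starRingEnd ℂ) b = 0 :=
      mul_left_cancel₀ hb0 (by
        linear_combination (starRingEnd ℂ) a * hbg + a * hbb + (-a) * haa)
    ext i j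
    fin_cases i <;> fin_cases j <;>
      simp [Matrix.mul_apply, Matrix.conjTranspose_apply, Fin.sum_univ_four,
        Matrix.one_apply] <;>
      first
        | exact h1
        | exact h2
        | linear_combination haa + hbb
        | linear_combination haa + hgg
        | linear_combination 2 * haa
        | ring1
end

section
/- Let R = [[a,0,0,b],[0,c,d,0],[0,d,c,0],[g,0,0,h]] be a 4×4 complex matrix (all entries nonzero) satisfying a² − d² = d² − h² = a·c − h·c and b·g = c². Then R satisfies the braided Yang–Baxter equation. -/
open Matrix Complex

set_option maxHeartbeats 1000000 in
theorem stmt19 (a b c d g h : ℂ)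
    (ha : a ≠ 0) (hb : b ≠ 0) (hc : c ≠ 0) (hd : d ≠ 0) (hg : g ≠ 0) (hh : h ≠ 0)
    (h1 : a ^ 2 - d ^ 2 = d ^ 2 - h ^ 2)
    (h2 : a ^ 2 - d ^ 2 = a * c - h * c)
    (h3 : b * g = c ^ 2) :
    YB !![a,0,0,b; 0,c,d,0; 0,d,c,0; g,0,0,h] := by
  unfold YB
  ext i j
  fin_cases i <;> fin_cases j <;>
    simp (config := { decide := true }) [RI, IR, Matrix.mul_apply, Fin.sum_univ_eight,
      Fin.val_zero, Fin.val_one, show ((2:Fin 8):ℕ)=2 from rfl, show ((3:Fin 8):ℕ)=3 from rfl,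
      show ((4:Fin 8):ℕ)=4 from rfl, show ((5:Fin 8):ℕ)=5 from rfl,
      show ((6:Fin 8):ℕ)=6 from rfl, show ((7:Fin 8):ℕ)=7 from rfl] <;>
    first
      | ring1
      | linear_combination d * h3
      | linear_combination -d * h3
      | linear_combination b * h2
      | linear_combination -b * h2
      | linear_combination g * h2
      | linear_combination -g * h2
      | linear_combination b * h1 - b * h2
      | linear_combination -b * h1 + b * h2
      | linear_combination g * h1 - g * h2
      | linear_combination -g * h1 + g * h2
      | linear_combination c * h2 + h * h3
      | linear_combination -c * h2 - h * h3
      | linear_combination c * h1 - c * h2 + a * h3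
      | linear_combination -c * h1 + c * h2 - a * h3
end
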